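/- Define the discrete iterated kernels by K_0 = K and K_n(t,s) = Σ_{η=s+1}^{t-1} K(t,η) K_{n-1}(η,s) for n ≥ 1. Then for every n ≥ 0 and all integers a ≤ s ≤ t ≤ b, |K_n(t,s)| ≤ M^{n+1} · C(t-s, n), where M = max_{(t,s) ∈ Ω} |K(t,s)| and C(·,·) is the binomial coefficient. -/

import Mathlib

/- The induction `|Kₙ₊₁(t,s)| ≤ M · Σ_{s<η<t} M^{n+1} C(η-s,n) ≤ M^{n+2} C(t-s,n+1)` closes by the
hockey-stick identity `Σ_{s≤η<t} C(η-s,n) = C(t-s,n+1)`, the discrete counterpart of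
`∫ₛᵗ hₙ(η,s) dη = hₙ₊₁(t,s)`. The maximum `M` exists because `Ω` is finite. -/

open Finset

/-- The discrete iterated kernels: `K₀ = K` and
`Kₙ(t,s) = Σ_{η=s+1}^{t-1} K(t,η) K_{n-1}(η,s)` for `n ≥ 1`. -/
noncomputable def iterKZ (K : ℤ → ℤ → ℝ) : ℕ → ℤ → ℤ → ℝ
  | 0 => K
  | n + 1 => fun t s => ∑ η ∈ Finset.Ioo s t, K t η * iterKZ K n η s

theorem sum_Ico_toNat_sub_choose (s t : ℤ) (n : ℕ) :
    ∑ η ∈ Ico s t, (η - s).toNat.choose n = (t - s).toNat.choose (n + 1) := by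
  rcases le_total t s with hts | hst
  · simp [Ico_eq_empty_of_le hts, Int.toNat_of_nonpos (sub_nonpos.2 hts)]
  obtain ⟨m, rfl⟩ := Int.le.dest hst
  induction m with
  | zero => simp
  | succ m ih =>
    have hs : s ≤ s + m := by omega
    rw [Nat.cast_succ, ← add_assoc, ← insert_Ico_right_eq_Ico_add_one hs,
      sum_insert (by simp), ih hs]
    rw [add_sub_cancel_left, Int.toNat_natCast,
      show s + m + 1 - s = ((m + 1 : ℕ) : ℤ) by push_cast; ring, Int.toNat_natCast,
      Nat.choose_succ_succ', add_comm]

theorem sum_Ioo_toNat_sub_choose_le (s t : ℤ) (n : ℕ) :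
    ∑ η ∈ Ioo s t, ((η - s).toNat.choose n : ℝ) ≤ (t - s).toNat.choose (n + 1) := by
  rw [← sum_Ico_toNat_sub_choose, Nat.cast_sum]
  exact sum_le_sum_of_subset_of_nonneg Ioo_subset_Ico_self fun _ _ _ ↦ by positivity

theorem abs_iterKZ_le {K : ℤ → ℤ → ℝ} {M : ℝ} {a b : ℤ}
    (hK : ∀ t s, a ≤ s → s ≤ t → t ≤ b → |K t s| ≤ M) (n : ℕ) {t s : ℤ}
    (has : a ≤ s) (hst : s ≤ t) (htb : t ≤ b) :
    |iterKZ K n t s| ≤ M ^ (n + 1) * (t - s).toNat.choose n := by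
  induction n generalizing t with
  | zero => simpa [iterKZ] using hK t s has hst htb
  | succ n ih =>
    have hM : 0 ≤ M := (abs_nonneg _).trans (hK a a le_rfl le_rfl (by omega))
    have hterm : ∀ η ∈ Ioo s t,
        |K t η * iterKZ K n η s| ≤ M ^ (n + 2) * ((η - s).toNat.choose n : ℝ) := by
      intro η hη
      obtain ⟨hsη, hηt⟩ := mem_Ioo.1 hη
      rw [abs_mul, pow_succ', mul_assoc]
      exact mul_le_mul (hK t η (by omega) hηt.le htb) (ih hsη.le (by omega))
        (abs_nonneg _) hM
    calc |iterKZ K (n + 1) t s|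
        ≤ ∑ η ∈ Ioo s t, |K t η * iterKZ K n η s| := abs_sum_le_sum_abs _ _
      _ ≤ M ^ (n + 2) * ∑ η ∈ Ioo s t, ((η - s).toNat.choose n : ℝ) := by
        rw [mul_sum]
        exact sum_le_sum hterm
      _ ≤ M ^ (n + 2) * (t - s).toNat.choose (n + 1) :=
        mul_le_mul_of_nonneg_left (sum_Ioo_toNat_sub_choose_le s t n) (by positivity)

theorem discrete_iterK_bound_general
    (a b : ℤ) (K : ℤ → ℤ → ℝ)
    (M : ℝ)
    (hM : M = sSup ((fun p : ℤ × ℤ => |K p.1 p.2|) ''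
      {p : ℤ × ℤ | a ≤ p.2 ∧ p.2 ≤ p.1 ∧ p.1 ≤ b})) :
    ∀ n : ℕ, ∀ t s : ℤ, a ≤ s → s ≤ t → t ≤ b →
      |iterKZ K n t s| ≤ M ^ (n + 1) * ((t - s).toNat.choose n) := by
  have hfin : {p : ℤ × ℤ | a ≤ p.2 ∧ p.2 ≤ p.1 ∧ p.1 ≤ b}.Finite := by
    refine (Set.finite_Icc (a, a) (b, b)).subset ?_
    rintro ⟨t, s⟩ ⟨has, hst, htb⟩
    simp only [Set.mem_Icc, Prod.le_def]
    omega
  have hK : ∀ t s, a ≤ s → s ≤ t → t ≤ b → |K t s| ≤ M := fun t s has hst htb ↦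
    hM ▸ le_csSup (hfin.image _).bddAbove ⟨(t, s), ⟨has, hst, htb⟩, rfl⟩
  exact fun n t s ↦ abs_iterKZ_le hK n

/-- **Bound on the discrete iterated kernels** (case `T = ℤ`, where `σ(s) = s+1` and
`hₙ(t,s) = C(t-s,n)`): for every `n ≥ 0` and all integers `a ≤ s ≤ t ≤ b`,
`|Kₙ(t,s)| ≤ M^{n+1} · C(t-s,n)`, where `M = max_{(t,s) ∈ Ω} |K(t,s)|`. -/
theorem discrete_iterK_bound
    (a b : ℤ) (hab : a < b) (K : ℤ → ℤ → ℝ)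
    (M : ℝ)
    (hM : M = sSup ((fun p : ℤ × ℤ => |K p.1 p.2|) ''
      {p : ℤ × ℤ | a ≤ p.2 ∧ p.2 ≤ p.1 ∧ p.1 ≤ b})) :
    ∀ n : ℕ, ∀ t s : ℤ, a ≤ s → s ≤ t → t ≤ b →
      |iterKZ K n t s| ≤ M ^ (n + 1) * ((t - s).toNat.choose n) :=
  discrete_iterK_bound_general a b K M hM
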